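/- Let d ≥ 1 be an integer and let A < 0 be a real number. For g, z ∈ ℝ^d define Λ_g(z) = (1−4A)^{d/4} · exp(A‖g‖₂² + √(1−4A)·⟨g,z⟩ − ‖z‖₂²/2). Then for every R ≥ 0, every z ∈ ℝ^d with ‖z‖₂ ≤ R and every g ∈ ℝ^d, one has 0 < Λ_g(z) ≤ (1−4A)^{d/4} · exp((1−4A)·R²/(−4A)). In particular, for bounded inputs the random features are uniformly bounded over all g ∈ ℝ^d. -/
import Mathlib


open MeasureTheory ProbabilityTheory Real RealInnerProductSpace

/-- The positive random feature map
`Λ_g(z) = (1−4A)^{d/4} · exp(A‖g‖₂² + √(1−4A)·⟨g,z⟩ − ‖z‖₂²/2)`. -/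
noncomputable def lambdaRF (d : ℕ) (A : ℝ) (g z : EuclideanSpace ℝ (Fin d)) : ℝ :=
  (1 - 4 * A) ^ ((d : ℝ) / 4) *
    Real.exp (A * ‖g‖ ^ 2 + Real.sqrt (1 - 4 * A) * ⟪g, z⟫ - ‖z‖ ^ 2 / 2)

theorem stmt_2 (d : ℕ) (hd : 1 ≤ d) (A : ℝ) (hA : A < 0) (R : ℝ) (hR : 0 ≤ R)
    (z : EuclideanSpace ℝ (Fin d)) (hz : ‖z‖ ≤ R) (g : EuclideanSpace ℝ (Fin d)) :
    0 < lambdaRF d A g z ∧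
      lambdaRF d A g z ≤
        (1 - 4 * A) ^ ((d : ℝ) / 4) * Real.exp ((1 - 4 * A) * R ^ 2 / (-(4 * A))) := by
  have h1 : (0:ℝ) < 1 - 4 * A := by linarith
  have hpow : 0 < (1 - 4 * A) ^ ((d : ℝ) / 4) := Real.rpow_pos_of_pos h1 _
  have hs : Real.sqrt (1 - 4 * A) ^ 2 = 1 - 4 * A := Real.sq_sqrt h1.le
  have hs0 : 0 ≤ Real.sqrt (1 - 4 * A) := Real.sqrt_nonneg _
  constructor
  · exact mul_pos hpow (Real.exp_pos _)
  · unfold lambdaRF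
    apply mul_le_mul_of_nonneg_left _ hpow.le
    apply Real.exp_le_exp.mpr
    have hip : ⟪g, z⟫ ≤ ‖g‖ * ‖z‖ := real_inner_le_norm g z
    have hg0 : (0:ℝ) ≤ ‖g‖ := norm_nonneg g
    have hz0 : (0:ℝ) ≤ ‖z‖ := norm_nonneg z
    have hzR : ‖z‖ ^ 2 ≤ R ^ 2 := by nlinarith
    rw [le_div_iff₀ (by linarith : (0:ℝ) < -(4*A))]
    nlinarith [sq_nonneg (2 * A * ‖g‖ + Real.sqrt (1 - 4 * A) * ‖z‖),
      mul_le_mul_of_nonneg_left hip hs0, sq_nonneg ‖z‖,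
      mul_le_mul_of_nonneg_left hzR h1.le]
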